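/- arXiv:1111.5950 — 7 statements merged into one kernel-verified Lean document; each statement's English description precedes it below -/
import Mathlib

section
/- Let X and N be independent real random variables with X distributed as the centered Gaussian law of variance σ_X² > 0 and N distributed as the centered Gaussian law of variance σ_N² > 0, and set Y = X + N. Then for every measurable g : ℝ → ℝ such that g(Y)·Y, g(Y)·X and g(Y)·N are integrable, the three linear regression coefficients coincide: E[g(Y)·Y]/E[Y²] = E[g(Y)·X]/E[X²] = E[g(Y)·N]/E[N²]. -/
/-!
Write `Y = X + N` and `W = Var N • X - Var X • N`. Independence of `X` and `N` gives
`cov[W, Y] = Var N · Var X - Var X · Var N = 0`; since `(W, Y)` is a linear image of the Gaussian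
vector `(X, N)`, this makes `W` independent of `Y`, so `E[g(Y) W] = E[g(Y)] E[W] = 0`. Hence
`Var N · E[g(Y) X] = Var X · E[g(Y) N]`, and with `E[Y²] = Var X + Var N` the three regression
coefficients agree.
-/

open MeasureTheory ProbabilityTheory

namespace ProbabilityTheory

variable {Ω : Type*} {mΩ : MeasurableSpace Ω} {μ : Measure Ω}

lemma hasLaw_of_map_eq {𝓧 : Type*} {m𝓧 : MeasurableSpace 𝓧} {X : Ω → 𝓧} {ν : Measure 𝓧}
    [IsProbabilityMeasure ν] (h : μ.map X = ν) : HasLaw X ν μ :=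
  ⟨.of_map_ne_zero (h ▸ IsProbabilityMeasure.ne_zero ν), h⟩

lemma HasLaw.integral_sq_of_gaussianReal_zero {Z : Ω → ℝ} {v : NNReal}
    (h : HasLaw Z (gaussianReal 0 v) μ) : ∫ ω, Z ω ^ 2 ∂μ = v := by
  rw [← variance_of_integral_eq_zero h.aemeasurable (h.integral_eq.trans integral_id_gaussianReal),
    h.variance_eq, variance_id_gaussianReal]

variable {X N : Ω → ℝ}

lemma IndepFun.covariance_var_mul_sub_var_mul_add_eq_zero [IsFiniteMeasure μ] (h : IndepFun X N μ)
    (hX : MemLp X 2 μ) (hN : MemLp N 2 μ) :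
    cov[fun ω ↦ Var[N; μ] * X ω - Var[X; μ] * N ω, fun ω ↦ X ω + N ω; μ] = 0 := by
  have hXN : MemLp (fun ω ↦ X ω + N ω) 2 μ := hX.add hN
  rw [covariance_fun_sub_left (hX.const_mul _) (hN.const_mul _) hXN,
    covariance_const_mul_left, covariance_const_mul_left,
    show (fun ω ↦ X ω + N ω) = X + N from rfl, covariance_add_right hX hX hN,
    covariance_add_right hN hX hN,
    covariance_self hX.aemeasurable, covariance_self hN.aemeasurable,
    h.covariance_eq_zero hX hN, h.symm.covariance_eq_zero hN hX]
  ring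

lemma IndepFun.indepFun_var_mul_sub_var_mul_add (h : IndepFun X N μ)
    (hX : HasGaussianLaw X μ) (hN : HasGaussianLaw N μ) :
    IndepFun (fun ω ↦ Var[N; μ] * X ω - Var[X; μ] * N ω) (fun ω ↦ X ω + N ω) μ := by
  have := hX.isProbabilityMeasure
  let L : ℝ × ℝ →L[ℝ] ℝ × ℝ :=
    (Var[N; μ] • ContinuousLinearMap.fst ℝ ℝ ℝ - Var[X; μ] • ContinuousLinearMap.snd ℝ ℝ ℝ).prod
      (ContinuousLinearMap.fst ℝ ℝ ℝ + ContinuousLinearMap.snd ℝ ℝ ℝ)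
  refine HasGaussianLaw.indepFun_of_covariance_eq_zero ?_
    (h.covariance_var_mul_sub_var_mul_add_eq_zero hX.memLp_two hN.memLp_two)
  simpa [L] using (h.hasGaussianLaw hX hN).map_fun L

theorem IndepFun.var_mul_integral_comp_add_mul_eq (h : IndepFun X N μ)
    (hX : HasGaussianLaw X μ) (hN : HasGaussianLaw N μ) (hX0 : μ[X] = 0) (hN0 : μ[N] = 0)
    {g : ℝ → ℝ} (hg : Measurable g)
    (hgX : Integrable (fun ω ↦ g (X ω + N ω) * X ω) μ)
    (hgN : Integrable (fun ω ↦ g (X ω + N ω) * N ω) μ) :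
    Var[N; μ] * ∫ ω, g (X ω + N ω) * X ω ∂μ = Var[X; μ] * ∫ ω, g (X ω + N ω) * N ω ∂μ := by
  have hW0 : ∫ ω, (Var[N; μ] * X ω - Var[X; μ] * N ω) ∂μ = 0 := by
    rw [integral_sub (hX.integrable.const_mul _) (hN.integrable.const_mul _), integral_const_mul,
      integral_const_mul, hX0, hN0]
    ring
  have horth : ∫ ω, g (X ω + N ω) * (Var[N; μ] * X ω - Var[X; μ] * N ω) ∂μ = 0 := by
    -- the product formula needs no integrability of `g (X + N)`
    rw [(h.indepFun_var_mul_sub_var_mul_add hX hN).symm.integral_fun_comp_mul_comp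
      (f := g) (g := fun w ↦ w) (by fun_prop) (by fun_prop) hg.aestronglyMeasurable
      aestronglyMeasurable_id]
    simp [hW0]
  rw [← integral_const_mul, ← integral_const_mul, ← sub_eq_zero, ← integral_sub
    (hgX.const_mul _) (hgN.const_mul _), ← horth]
  congr 1 with ω
  ring

end ProbabilityTheory

theorem equal_gain_gaussian_general
    {Ω : Type*} {mΩ : MeasurableSpace Ω} (μ : Measure Ω)
    (X N : Ω → ℝ)
    (vX vN : NNReal) (hvX : 0 < vX) (hvN : 0 < vN)
    (hX : μ.map X = gaussianReal 0 vX) (hN : μ.map N = gaussianReal 0 vN)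
    (hindep : IndepFun X N μ)
    (g : ℝ → ℝ) (hg : Measurable g)
    (hgX : Integrable (fun ω => g (X ω + N ω) * X ω) μ)
    (hgN : Integrable (fun ω => g (X ω + N ω) * N ω) μ) :
    (∫ ω, g (X ω + N ω) * (X ω + N ω) ∂μ) / (∫ ω, (X ω + N ω) ^ 2 ∂μ)
      = (∫ ω, g (X ω + N ω) * X ω ∂μ) / (∫ ω, X ω ^ 2 ∂μ)
    ∧ (∫ ω, g (X ω + N ω) * (X ω + N ω) ∂μ) / (∫ ω, (X ω + N ω) ^ 2 ∂μ)
      = (∫ ω, g (X ω + N ω) * N ω ∂μ) / (∫ ω, N ω ^ 2 ∂μ) := by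
  have hXlaw := hasLaw_of_map_eq hX
  have hNlaw := hasLaw_of_map_eq hN
  have hYlaw : HasLaw (fun ω ↦ X ω + N ω) (gaussianReal 0 (vX + vN)) μ :=
    hasLaw_of_map_eq ((gaussianReal_add_gaussianReal_of_indepFun hindep hX hN).trans
      (by rw [zero_add]))
  have hgain := hindep.var_mul_integral_comp_add_mul_eq hXlaw.hasGaussianLaw
    hNlaw.hasGaussianLaw (hXlaw.integral_eq.trans integral_id_gaussianReal)
    (hNlaw.integral_eq.trans integral_id_gaussianReal) hg hgX hgN
  rw [hXlaw.variance_eq, hNlaw.variance_eq, variance_id_gaussianReal,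
    variance_id_gaussianReal] at hgain
  have hgY : ∫ ω, g (X ω + N ω) * (X ω + N ω) ∂μ
      = (∫ ω, g (X ω + N ω) * X ω ∂μ) + ∫ ω, g (X ω + N ω) * N ω ∂μ := by
    simp_rw [mul_add]
    exact integral_add hgX hgN
  rw [hgY, hXlaw.integral_sq_of_gaussianReal_zero, hNlaw.integral_sq_of_gaussianReal_zero,
    hYlaw.integral_sq_of_gaussianReal_zero]
  push_cast
  constructor
  · rw [div_eq_div_iff (by positivity) (by positivity)]
    linear_combination -hgain
  · rw [div_eq_div_iff (by positivity) (by positivity)]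
    linear_combination hgain

/-- Equal-gain theorem for independent zero-mean Gaussian inputs:
if `X ~ N(0, vX)`, `N ~ N(0, vN)` are independent and `Y = X + N`, then
`k_y = k_x = k_n` for any nonlinearity `g`. -/
theorem equal_gain_gaussian
    {Ω : Type*} {mΩ : MeasurableSpace Ω} (μ : Measure Ω) [IsProbabilityMeasure μ]
    (X N : Ω → ℝ) (hXmeas : Measurable X) (hNmeas : Measurable N)
    (vX vN : NNReal) (hvX : 0 < vX) (hvN : 0 < vN)
    (hX : μ.map X = gaussianReal 0 vX) (hN : μ.map N = gaussianReal 0 vN)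
    (hindep : IndepFun X N μ)
    (g : ℝ → ℝ) (hg : Measurable g)
    (hgY : Integrable (fun ω => g (X ω + N ω) * (X ω + N ω)) μ)
    (hgX : Integrable (fun ω => g (X ω + N ω) * X ω) μ)
    (hgN : Integrable (fun ω => g (X ω + N ω) * N ω) μ) :
    (∫ ω, g (X ω + N ω) * (X ω + N ω) ∂μ) / (∫ ω, (X ω + N ω) ^ 2 ∂μ)
      = (∫ ω, g (X ω + N ω) * X ω ∂μ) / (∫ ω, X ω ^ 2 ∂μ)
    ∧ (∫ ω, g (X ω + N ω) * (X ω + N ω) ∂μ) / (∫ ω, (X ω + N ω) ^ 2 ∂μ)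
      = (∫ ω, g (X ω + N ω) * N ω ∂μ) / (∫ ω, N ω ^ 2 ∂μ) :=
  equal_gain_gaussian_general (mΩ := mΩ) μ X N vX vN hvX hvN hX hN hindep g hg hgX hgN
end

section
/- Let Q ≥ 1 and let X₁, …, X_Q be independent, identically distributed real random variables with E[X₁] = 0 and 0 < E[X₁²] < ∞, and set Y = X₁ + ⋯ + X_Q. Then for every measurable g : ℝ → ℝ such that g(Y)·Y and g(Y)·X_i are integrable, and for every index i, the partial regression coefficient of g(Y) on X_i equals the input–output regression coefficient: E[g(Y)·X_i]/E[X_i²] = E[g(Y)·Y]/E[Y²]. -/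
open MeasureTheory ProbabilityTheory

/-!
The joint law of an i.i.d. family is a product of equal factors, hence invariant under
permutations of the indices. Swapping `i` and `k` fixes `Y = ∑ j, X j` and exchanges `X i` with
`X k`, so all the covariances `E[g(Y) X k]` coincide and their sum `E[g(Y) Y]` is `Q E[g(Y) X i]`.
Independence and zero means make the cross terms of `E[Y²]` vanish, so `E[Y²] = Q E[X i²]`,
and the factor `Q` cancels.
-/

namespace ProbabilityTheory

variable {Ω ι : Type*} {mΩ : MeasurableSpace Ω} {μ : Measure Ω} [Fintype ι]

lemma iIndepFun.identDistrib_comp_perm {β : Type*} [MeasurableSpace β] {X : ι → Ω → β}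
    (hX : ∀ i, Measurable (X i)) (hindep : iIndepFun X μ)
    (hident : ∀ i j, μ.map (X i) = μ.map (X j)) (σ : Equiv.Perm ι) :
    IdentDistrib (fun ω i => X (σ i) ω) (fun ω i => X i ω) μ μ where
  aemeasurable_fst := (measurable_pi_lambda _ fun i => hX (σ i)).aemeasurable
  aemeasurable_snd := (measurable_pi_lambda _ hX).aemeasurable
  map_eq := by
    rw [(hindep.precomp σ.injective).map_fun_eq_pi_map fun i => (hX (σ i)).aemeasurable,
      hindep.map_fun_eq_pi_map fun i => (hX i).aemeasurable]
    exact congrArg Measure.pi (funext fun i => hident (σ i) i)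

lemma iIndepFun.integral_comp_sum_mul_eq {X : ι → Ω → ℝ}
    (hX : ∀ i, Measurable (X i)) (hindep : iIndepFun X μ)
    (hident : ∀ i j, μ.map (X i) = μ.map (X j)) {g : ℝ → ℝ} (hg : Measurable g) (i k : ι) :
    ∫ ω, g (∑ j, X j ω) * X k ω ∂μ = ∫ ω, g (∑ j, X j ω) * X i ω ∂μ := by
  classical
  have hu : Measurable fun x : ι → ℝ => g (∑ j, x j) * x i :=
    (hg.comp (Finset.measurable_sum _ fun j _ => measurable_pi_apply j)).mul
      (measurable_pi_apply i)
  have hsum (ω : Ω) : ∑ j, X (Equiv.swap i k j) ω = ∑ j, X j ω :=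
    Equiv.sum_comp _ fun j => X j ω
  have h := ((hindep.identDistrib_comp_perm hX hident (Equiv.swap i k)).comp hu).integral_eq
  simpa only [Function.comp_def, hsum, Equiv.swap_apply_left] using h

lemma iIndepFun.integral_sum_sq {X : ι → Ω → ℝ} [IsFiniteMeasure μ]
    (hindep : iIndepFun X μ) (hmean : ∀ i, ∫ ω, X i ω ∂μ = 0) (hX2 : ∀ i, MemLp (X i) 2 μ) :
    ∫ ω, (∑ j, X j ω) ^ 2 ∂μ = ∑ j, ∫ ω, X j ω ^ 2 ∂μ := by
  have hsum_mean : ∫ ω, (∑ j, X j) ω ∂μ = 0 := by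
    simp_rw [Finset.sum_apply]
    rw [integral_finsetSum _ fun j _ => (hX2 j).integrable one_le_two]
    simp [hmean]
  have hvar := IndepFun.variance_sum (s := Finset.univ) (fun j _ => hX2 j)
    (fun j _ k _ hjk => hindep.indepFun hjk)
  rw [variance_of_integral_eq_zero (memLp_finsetSum' _ fun j _ => hX2 j).aemeasurable
    hsum_mean] at hvar
  simpa only [Finset.sum_apply,
    fun j => variance_of_integral_eq_zero (hX2 j).aemeasurable (hmean j)] using hvar

end ProbabilityTheory

theorem equal_gain_iid_sum_general
    {Ω : Type*} {mΩ : MeasurableSpace Ω} (μ : Measure Ω) [IsProbabilityMeasure μ]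
    (Q : ℕ) (X : Fin Q → Ω → ℝ)
    (hXmeas : ∀ i, Measurable (X i))
    (hindep : iIndepFun X μ)
    (hident : ∀ i j, μ.map (X i) = μ.map (X j))
    (hmean : ∀ i, ∫ ω, X i ω ∂μ = 0)
    (hX2 : ∀ i, MemLp (X i) 2 μ)
    (g : ℝ → ℝ) (hg : Measurable g)
    (hgX : ∀ i, Integrable (fun ω => g (∑ j, X j ω) * X i ω) μ)
    (i : Fin Q) :
    (∫ ω, g (∑ j, X j ω) * X i ω ∂μ) / (∫ ω, X i ω ^ 2 ∂μ)
      = (∫ ω, g (∑ j, X j ω) * (∑ j, X j ω) ∂μ) / (∫ ω, (∑ j, X j ω) ^ 2 ∂μ) := by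
  have hQ : (Q : ℝ) ≠ 0 := Nat.cast_ne_zero.mpr i.pos.ne'
  have hnum : ∫ ω, g (∑ j, X j ω) * (∑ j, X j ω) ∂μ
      = Q * ∫ ω, g (∑ j, X j ω) * X i ω ∂μ := by
    simp_rw [Finset.mul_sum]
    rw [integral_finsetSum _ fun k _ => hgX k]
    simp [hindep.integral_comp_sum_mul_eq hXmeas hident hg i]
  have hsq (k : Fin Q) : ∫ ω, X k ω ^ 2 ∂μ = ∫ ω, X i ω ^ 2 ∂μ :=
    (IdentDistrib.comp ⟨(hXmeas k).aemeasurable, (hXmeas i).aemeasurable, hident k i⟩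
      (measurable_id.pow_const 2)).integral_eq
  have hden : ∫ ω, (∑ j, X j ω) ^ 2 ∂μ = Q * ∫ ω, X i ω ^ 2 ∂μ := by
    simp [hindep.integral_sum_sq hmean hX2, hsq]
  rw [hnum, hden, mul_div_mul_left _ _ hQ]

/-- Equal-gain theorem for the sum of `Q` i.i.d. zero-mean random variables:
for `Y = X₁ + ⋯ + X_Q`, every partial regression coefficient of `g(Y)` on `X_i`
equals the input-output regression coefficient of `g(Y)` on `Y`. -/
theorem equal_gain_iid_sum
    {Ω : Type*} {mΩ : MeasurableSpace Ω} (μ : Measure Ω) [IsProbabilityMeasure μ]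
    (Q : ℕ) (hQ : 1 ≤ Q) (X : Fin Q → Ω → ℝ)
    (hXmeas : ∀ i, Measurable (X i))
    (hindep : iIndepFun X μ)
    (hident : ∀ i j, μ.map (X i) = μ.map (X j))
    (hmean : ∀ i, ∫ ω, X i ω ∂μ = 0)
    (hX2 : ∀ i, MemLp (X i) 2 μ) (hX2pos : ∀ i, 0 < ∫ ω, X i ω ^ 2 ∂μ)
    (g : ℝ → ℝ) (hg : Measurable g)
    (hgY : Integrable (fun ω => g (∑ j, X j ω) * (∑ j, X j ω)) μ)
    (hgX : ∀ i, Integrable (fun ω => g (∑ j, X j ω) * X i ω) μ)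
    (i : Fin Q) :
    (∫ ω, g (∑ j, X j ω) * X i ω ∂μ) / (∫ ω, X i ω ^ 2 ∂μ)
      = (∫ ω, g (∑ j, X j ω) * (∑ j, X j ω) ∂μ) / (∫ ω, (∑ j, X j ω) ^ 2 ∂μ) :=
  equal_gain_iid_sum_general (mΩ := mΩ) μ Q X hXmeas hindep hident hmean hX2 g hg hgX i
end

section
/- Let Z and X be square-integrable real random variables on a probability space with E[X²] > 0, and let k = E[Z·X]/E[X²] be the linear regression coefficient of Z on X. Then E[Z²]·E[(Z − X)²] ≥ (E[Z²] − k²·E[X²])·E[X²]. (Equivalently, with SNR = k²·E[X²]/(E[Z²] − k²·E[X²]) and MSE = E[(Z − X)²], whenever E[Z²] > k²·E[X²] one has 1 + SNR ≥ E[X²]/MSE, so the SNR-based capacity lower bound ½·log(1 + SNR) is at least the MSE-based bound ½·log(E[X²]/MSE).) -/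
open MeasureTheory

/-! With `a = E[Z²]`, `b = E[X²]`, `c = E[Z·X]`, expanding the square gives
`E[(Z − X)²] = a − 2c + b`, and for `b ≠ 0` the right-hand side is `a·b − c²`.
The difference of the two sides is then `a² − 2ac + c² = (a − c)² ≥ 0`. -/

theorem integral_sub_sq_eq {α : Type*} {mα : MeasurableSpace α} {μ : Measure α}
    {f g : α → ℝ} (hf : MemLp f 2 μ) (hg : MemLp g 2 μ) :
    ∫ x, (f x - g x) ^ 2 ∂μ
      = (∫ x, f x ^ 2 ∂μ) - 2 * (∫ x, f x * g x ∂μ) + ∫ x, g x ^ 2 ∂μ := by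
  have hfg : Integrable (fun x => f x * g x) μ := hf.integrable_mul hg
  have hf2 : Integrable (fun x => f x ^ 2) μ := hf.integrable_sq
  have hf2_sub : Integrable (fun x => f x ^ 2 - 2 * (f x * g x)) μ := hf2.sub (hfg.const_mul 2)
  simp_rw [sub_sq, mul_assoc]
  rw [integral_add hf2_sub hg.integrable_sq,
    integral_sub hf2 (hfg.const_mul 2), integral_const_mul]

theorem sub_div_sq_mul_mul_le {a b c : ℝ} (hb : b ≠ 0) :
    (a - (c / b) ^ 2 * b) * b ≤ a * (a - 2 * c + b) := by
  have hrhs : (a - (c / b) ^ 2 * b) * b = a * b - c ^ 2 := by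
    field_simp
  nlinarith [sq_nonneg (a - c)]

theorem snr_mse_bound_comparison_general
    {Ω : Type*} {mΩ : MeasurableSpace Ω} (μ : Measure Ω)
    (Z X : Ω → ℝ)
    (hZ2 : MemLp Z 2 μ) (hX2 : MemLp X 2 μ)
    (hX2pos : 0 < ∫ ω, X ω ^ 2 ∂μ) :
    (∫ ω, Z ω ^ 2 ∂μ) * ∫ ω, (Z ω - X ω) ^ 2 ∂μ
      ≥ ((∫ ω, Z ω ^ 2 ∂μ)
          - ((∫ ω, Z ω * X ω ∂μ) / (∫ ω, X ω ^ 2 ∂μ)) ^ 2 * ∫ ω, X ω ^ 2 ∂μ)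
        * ∫ ω, X ω ^ 2 ∂μ := by
  rw [integral_sub_sq_eq hZ2 hX2]
  exact sub_div_sq_mul_mul_le hX2pos.ne'

/-- SNR-vs-MSE capacity bound comparison, in product form: for square-integrable
`Z`, `X` with `E[X²] > 0` and `k = E[Z·X]/E[X²]`, one has
`E[Z²]·E[(Z − X)²] ≥ (E[Z²] − k²·E[X²])·E[X²]`. -/
theorem snr_mse_bound_comparison
    {Ω : Type*} {mΩ : MeasurableSpace Ω} (μ : Measure Ω) [IsProbabilityMeasure μ]
    (Z X : Ω → ℝ) (hZmeas : Measurable Z) (hXmeas : Measurable X)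
    (hZ2 : MemLp Z 2 μ) (hX2 : MemLp X 2 μ)
    (hX2pos : 0 < ∫ ω, X ω ^ 2 ∂μ) :
    (∫ ω, Z ω ^ 2 ∂μ) * ∫ ω, (Z ω - X ω) ^ 2 ∂μ
      ≥ ((∫ ω, Z ω ^ 2 ∂μ)
          - ((∫ ω, Z ω * X ω ∂μ) / (∫ ω, X ω ^ 2 ∂μ)) ^ 2 * ∫ ω, X ω ^ 2 ∂μ)
        * ∫ ω, X ω ^ 2 ∂μ :=
  snr_mse_bound_comparison_general (mΩ := mΩ) μ Z X hZ2 hX2 hX2pos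
end

section
/- Let X and N be independent real random variables, X distributed as the centered Gaussian law of variance σ_X² > 0 and N as the centered Gaussian law of variance σ_N² > 0, let α_x, α_n be nonzero reals, and set Y = α_x·X + α_n·N. Then for every measurable g : ℝ → ℝ with Z = g(Y) such that Z·Y, Z·X and Z·N are integrable: E[Z·Y]/E[Y²] = (1/α_x)·E[Z·X]/E[X²] = (1/α_n)·E[Z·N]/E[N²]. -/
open MeasureTheory ProbabilityTheory

/-!
The pair `(X, N)` is a Gaussian vector, so `Y = a X + b N` is independent of
`W = b Var[N] X - a Var[X] N`, the two being uncorrelated. As `E[W] = 0`, this gives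
`E[g(Y) W] = E[g(Y)] E[W] = 0` (integrability of `g(Y) W` already forces that of `g(Y)`). Hence
`b Var[N] E[g(Y) X] = a Var[X] E[g(Y) N]`, and together with
`E[g(Y) Y] = a E[g(Y) X] + b E[g(Y) N]` and `E[Y²] = a² Var[X] + b² Var[N]` this is the
claimed equality of regression coefficients.
-/

namespace ProbabilityTheory

variable {Ω : Type*} {mΩ : MeasurableSpace Ω} {P : Measure Ω} {X N : Ω → ℝ} {v w : NNReal}

lemma integral_sq_of_hasLaw_gaussianReal (hX : HasLaw X (gaussianReal 0 v) P) :
    ∫ ω, X ω ^ 2 ∂P = v := by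
  have hmean : ∫ x, x ∂gaussianReal 0 v = 0 := integral_id_gaussianReal
  rw [← variance_fun_id_gaussianReal (μ := 0),
    variance_of_integral_eq_zero aemeasurable_id' hmean]
  exact hX.integral_comp (f := fun x ↦ x ^ 2) (by fun_prop)

lemma IndepFun.indepFun_const_mul_add_const_mul (hXN : X ⟂ᵢ[P] N)
    (hX : HasGaussianLaw X P) (hN : HasGaussianLaw N P) {a b c d : ℝ}
    (h : a * c * Var[X; P] + b * d * Var[N; P] = 0) :
    (fun ω ↦ a * X ω + b * N ω) ⟂ᵢ[P] (fun ω ↦ c * X ω + d * N ω) := by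
  have := hX.isProbabilityMeasure
  let L : ℝ × ℝ →L[ℝ] ℝ × ℝ :=
    (a • ContinuousLinearMap.fst ℝ ℝ ℝ + b • ContinuousLinearMap.snd ℝ ℝ ℝ).prod
      (c • ContinuousLinearMap.fst ℝ ℝ ℝ + d • ContinuousLinearMap.snd ℝ ℝ ℝ)
  refine HasGaussianLaw.indepFun_of_covariance_eq_zero
    ((hXN.hasGaussianLaw hX hN).map_fun L :) ?_
  have hX2 := hX.memLp_two
  have hN2 := hN.memLp_two
  have hcov : cov[X, N; P] = 0 := hXN.covariance_eq_zero hX2 hN2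
  change cov[(fun ω ↦ a * X ω) + (fun ω ↦ b * N ω), (fun ω ↦ c * X ω) + (fun ω ↦ d * N ω); P] = 0
  rw [covariance_add_left (hX2.const_mul a) (hN2.const_mul b)
      ((hX2.const_mul c).add (hN2.const_mul d)),
    covariance_add_right (hX2.const_mul a) (hX2.const_mul c) (hN2.const_mul d),
    covariance_add_right (hN2.const_mul b) (hX2.const_mul c) (hN2.const_mul d)]
  simp only [covariance_const_mul_left, covariance_const_mul_right,
    covariance_self hX.aemeasurable, covariance_self hN.aemeasurable, hcov,
    covariance_comm N X]
  linear_combination h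

lemma IndepFun.hasLaw_const_mul_add_const_mul (hXN : X ⟂ᵢ[P] N)
    {m₁ m₂ : ℝ} (hX : HasLaw X (gaussianReal m₁ v) P) (hN : HasLaw N (gaussianReal m₂ w) P)
    (a b : ℝ) :
    HasLaw (fun ω ↦ a * X ω + b * N ω)
      (gaussianReal (a * m₁ + b * m₂)
        (.mk (a ^ 2) (sq_nonneg a) * v + .mk (b ^ 2) (sq_nonneg b) * w)) P where
  aemeasurable := by fun_prop
  map_eq := gaussianReal_add_gaussianReal_of_indepFun
    (hXN.comp (measurable_const_mul a) (measurable_const_mul b))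
    (gaussianReal_const_mul hX a).map_eq (gaussianReal_const_mul hN b).map_eq

lemma IndepFun.integral_comp_mul_eq_zero {Y W : Ω → ℝ} (hYW : Y ⟂ᵢ[P] W)
    (hY : AEMeasurable Y P) (hW : AEMeasurable W P) {g : ℝ → ℝ} (hg : Measurable g)
    (hW₀ : ∫ ω, W ω ∂P = 0) :
    ∫ ω, g (Y ω) * W ω ∂P = 0 := by
  rw [← mul_zero (∫ ω, g (Y ω) ∂P), ← hW₀]
  exact hYW.integral_fun_comp_mul_comp (g := id) hY hW hg.aestronglyMeasurable
    aestronglyMeasurable_id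

lemma IndepFun.mul_integral_comp_mul_eq_of_gaussianReal (hXN : X ⟂ᵢ[P] N)
    (hX : HasLaw X (gaussianReal 0 v) P) (hN : HasLaw N (gaussianReal 0 w) P) (a b : ℝ)
    {g : ℝ → ℝ} (hg : Measurable g)
    (hgX : Integrable (fun ω ↦ g (a * X ω + b * N ω) * X ω) P)
    (hgN : Integrable (fun ω ↦ g (a * X ω + b * N ω) * N ω) P) :
    b * w * ∫ ω, g (a * X ω + b * N ω) * X ω ∂P
      = a * v * ∫ ω, g (a * X ω + b * N ω) * N ω ∂P := by
  have hXg := hX.hasGaussianLaw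
  have hNg := hN.hasGaussianLaw
  have hindep : (fun ω ↦ a * X ω + b * N ω) ⟂ᵢ[P] (fun ω ↦ b * w * X ω + -(a * v) * N ω) :=
    hXN.indepFun_const_mul_add_const_mul hXg hNg (by
      rw [hX.variance_eq, hN.variance_eq, variance_id_gaussianReal, variance_id_gaussianReal]
      ring)
  have hmean : ∫ ω, (b * w * X ω + -(a * v) * N ω) ∂P = 0 := by
    rw [integral_add (hXg.integrable.const_mul _) (hNg.integrable.const_mul _),
      integral_const_mul, integral_const_mul, hX.integral_eq, hN.integral_eq]
    simp
  have horth := hindep.integral_comp_mul_eq_zero (by fun_prop) (by fun_prop) hg hmean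
  rw [← integral_const_mul, ← integral_const_mul, ← sub_eq_zero,
    ← integral_sub (hgX.const_mul _) (hgN.const_mul _), ← horth]
  congr with ω
  ring

end ProbabilityTheory

lemma regression_coeff_eq_of_mul_eq {a b v w A B : ℝ} (ha : a ≠ 0) (hv : 0 < v) (hw : 0 ≤ w)
    (h : b * w * A = a * v * B) :
    (a * A + b * B) / (a ^ 2 * v + b ^ 2 * w) = 1 / a * (A / v) := by
  have hden : 0 < a ^ 2 * v + b ^ 2 * w := by positivity
  calc (a * A + b * B) / (a ^ 2 * v + b ^ 2 * w) = A / (a * v) := by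
        rw [div_eq_div_iff hden.ne' (mul_ne_zero ha hv.ne')]
        linear_combination (-b) * h
    _ = 1 / a * (A / v) := by rw [div_mul_div_comm, one_mul]

theorem scaled_gaussian_regression_general
    {Ω : Type*} {mΩ : MeasurableSpace Ω} (μ : Measure Ω) [IsProbabilityMeasure μ]
    (X N : Ω → ℝ)
    (vX vN : NNReal) (hvX : 0 < vX) (hvN : 0 < vN)
    (hX : μ.map X = gaussianReal 0 vX) (hN : μ.map N = gaussianReal 0 vN)
    (hindep : IndepFun X N μ)
    (αx αn : ℝ) (hαx : αx ≠ 0) (hαn : αn ≠ 0)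
    (g : ℝ → ℝ) (hg : Measurable g)
    (hgX : Integrable (fun ω => g (αx * X ω + αn * N ω) * X ω) μ)
    (hgN : Integrable (fun ω => g (αx * X ω + αn * N ω) * N ω) μ) :
    (∫ ω, g (αx * X ω + αn * N ω) * (αx * X ω + αn * N ω) ∂μ)
        / (∫ ω, (αx * X ω + αn * N ω) ^ 2 ∂μ)
      = (1 / αx) * ((∫ ω, g (αx * X ω + αn * N ω) * X ω ∂μ) / (∫ ω, X ω ^ 2 ∂μ))
    ∧ (∫ ω, g (αx * X ω + αn * N ω) * (αx * X ω + αn * N ω) ∂μ)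
        / (∫ ω, (αx * X ω + αn * N ω) ^ 2 ∂μ)
      = (1 / αn) * ((∫ ω, g (αx * X ω + αn * N ω) * N ω ∂μ) / (∫ ω, N ω ^ 2 ∂μ)) := by
  have hXlaw : HasLaw X (gaussianReal 0 vX) μ :=
    ⟨.of_map_ne_zero (hX ▸ IsProbabilityMeasure.ne_zero _), hX⟩
  have hNlaw : HasLaw N (gaussianReal 0 vN) μ :=
    ⟨.of_map_ne_zero (hN ▸ IsProbabilityMeasure.ne_zero _), hN⟩
  have hYlaw := hindep.hasLaw_const_mul_add_const_mul hXlaw hNlaw αx αn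
  rw [mul_zero, mul_zero, add_zero] at hYlaw
  have hbalance := hindep.mul_integral_comp_mul_eq_of_gaussianReal hXlaw hNlaw αx αn hg hgX hgN
  have hnum : ∫ ω, g (αx * X ω + αn * N ω) * (αx * X ω + αn * N ω) ∂μ
      = αx * ∫ ω, g (αx * X ω + αn * N ω) * X ω ∂μ
        + αn * ∫ ω, g (αx * X ω + αn * N ω) * N ω ∂μ := by
    rw [← integral_const_mul, ← integral_const_mul,
      ← integral_add (hgX.const_mul _) (hgN.const_mul _)]
    congr with ω
    ring
  rw [hnum, integral_sq_of_hasLaw_gaussianReal hYlaw, integral_sq_of_hasLaw_gaussianReal hXlaw,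
    integral_sq_of_hasLaw_gaussianReal hNlaw]
  simp only [NNReal.coe_add, NNReal.coe_mul, NNReal.coe_mk]
  refine ⟨regression_coeff_eq_of_mul_eq hαx hvX hvN.le hbalance, ?_⟩
  rw [add_comm (αx * _), add_comm (αx ^ 2 * _)]
  exact regression_coeff_eq_of_mul_eq hαn hvN hvX.le hbalance.symm

/-- Lemma 1: for independent centered Gaussians `X`, `N` and `Y = α_x·X + α_n·N`
with nonzero reals `α_x`, `α_n`, for any nonlinearity `Z = g(Y)`:
`E[Z·Y]/E[Y²] = (1/α_x)·E[Z·X]/E[X²] = (1/α_n)·E[Z·N]/E[N²]`. -/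
theorem scaled_gaussian_regression
    {Ω : Type*} {mΩ : MeasurableSpace Ω} (μ : Measure Ω) [IsProbabilityMeasure μ]
    (X N : Ω → ℝ) (hXmeas : Measurable X) (hNmeas : Measurable N)
    (vX vN : NNReal) (hvX : 0 < vX) (hvN : 0 < vN)
    (hX : μ.map X = gaussianReal 0 vX) (hN : μ.map N = gaussianReal 0 vN)
    (hindep : IndepFun X N μ)
    (αx αn : ℝ) (hαx : αx ≠ 0) (hαn : αn ≠ 0)
    (g : ℝ → ℝ) (hg : Measurable g)
    (hgY : Integrable (fun ω => g (αx * X ω + αn * N ω) * (αx * X ω + αn * N ω)) μ)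
    (hgX : Integrable (fun ω => g (αx * X ω + αn * N ω) * X ω) μ)
    (hgN : Integrable (fun ω => g (αx * X ω + αn * N ω) * N ω) μ) :
    (∫ ω, g (αx * X ω + αn * N ω) * (αx * X ω + αn * N ω) ∂μ)
        / (∫ ω, (αx * X ω + αn * N ω) ^ 2 ∂μ)
      = (1 / αx) * ((∫ ω, g (αx * X ω + αn * N ω) * X ω ∂μ) / (∫ ω, X ω ^ 2 ∂μ))
    ∧ (∫ ω, g (αx * X ω + αn * N ω) * (αx * X ω + αn * N ω) ∂μ)
        / (∫ ω, (αx * X ω + αn * N ω) ^ 2 ∂μ)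
      = (1 / αn) * ((∫ ω, g (αx * X ω + αn * N ω) * N ω ∂μ) / (∫ ω, N ω ^ 2 ∂μ)) :=
  scaled_gaussian_regression_general (mΩ := mΩ) μ X N vX vN hvX hvN hX hN hindep αx αn hαx hαn g hg
    hgX hgN
end

section
/- Let X and N be independent real random variables, X distributed as the centered Gaussian law of variance σ_X² > 0 and N as the centered Gaussian law of variance σ_N² > 0, and set Y = X + N. Let g : ℝ → ℝ be continuously differentiable such that g(Y)·X is integrable, g′(Y) is integrable, and y ↦ g(y)·exp(−y²/(2(σ_X²+σ_N²))) tends to 0 as y → ±∞. Then E[X·g(X + N)] = σ_X²·E[g′(X + N)]; in particular the partial regression coefficient k_x = E[g(Y)·X]/σ_X² equals the average derivative E[g′(Y)]. -/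
/-!
Conditioning on `N = n` (Fubini, by independence) reduces the identity to
`E[X g(X + n)] = σ_X² E[g'(X + n)]` for each fixed `n`, which is Stein's lemma for `X` applied to
the shifted function `g(· + n)`. The boundary terms of its integration by parts vanish because the
Gaussian factor `exp(-x²/(2σ_X²))` is dominated by the shifted factor
`exp(-(x + n)²/(2(σ_X² + σ_N²)))` of larger variance, along which `g(· + n)` is assumed to vanish.
-/

open MeasureTheory ProbabilityTheory Filter Asymptotics Real Topology

namespace ProbabilityTheory

lemma integrable_gaussianReal_iff {m : ℝ} {v : NNReal} (hv : v ≠ 0) {f : ℝ → ℝ} :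
    Integrable f (gaussianReal m v) ↔ Integrable (fun x => gaussianPDFReal m v x * f x) := by
  rw [gaussianReal_of_var_ne_zero _ hv, integrable_withDensity_iff_integrable_smul'
    (measurable_gaussianPDF _ _) (ae_of_all _ fun _ => gaussianPDF_lt_top)]
  simp only [toReal_gaussianPDF, smul_eq_mul]

lemma hasDerivAt_gaussianPDFReal (m : ℝ) (v : NNReal) (x : ℝ) :
    HasDerivAt (gaussianPDFReal m v) (-((x - m) / v) * gaussianPDFReal m v x) x := by
  have hexponent : HasDerivAt (fun y => -(y - m) ^ 2 / (2 * v)) (-((x - m) / v)) x :=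
    ((((hasDerivAt_id' x).sub_const m).fun_pow 2).neg.div_const (2 * (v : ℝ))).congr_deriv
      (by norm_num; ring)
  exact (hexponent.exp.const_mul (√(2 * π * v))⁻¹).congr_deriv (by rw [gaussianPDFReal]; ring)

/-- Stein's lemma, by integration by parts against the Gaussian density. -/
theorem integral_sub_mul_gaussianReal_eq_mul_integral_deriv {m : ℝ} {v : NNReal}
    {f f' : ℝ → ℝ} (hf : ∀ x, HasDerivAt f (f' x) x)
    (hint : Integrable (fun x => (x - m) * f x) (gaussianReal m v))
    (hint' : Integrable f' (gaussianReal m v))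
    (hbot : Tendsto (fun x => f x * gaussianPDFReal m v x) atBot (𝓝 0))
    (htop : Tendsto (fun x => f x * gaussianPDFReal m v x) atTop (𝓝 0)) :
    ∫ x, (x - m) * f x ∂gaussianReal m v = v * ∫ x, f' x ∂gaussianReal m v := by
  rcases eq_or_ne v 0 with rfl | hv
  · simp
  set p := gaussianPDFReal m v
  rw [integrable_gaussianReal_iff hv] at hint hint'
  have hibp := integral_mul_deriv_eq_deriv_mul (fun x _ => hf x)
    (fun x _ => hasDerivAt_gaussianPDFReal m v x)
    (hint.const_mul (-(v : ℝ)⁻¹) |>.congr (ae_of_all _ fun x => by simp only [Pi.mul_apply]; ring))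
    (hint'.congr (ae_of_all _ fun x => by simp only [Pi.mul_apply]; ring)) hbot htop
  have hlhs : ∫ x, f x * (-((x - m) / v) * p x) = -(v : ℝ)⁻¹ * ∫ x, p x * ((x - m) * f x) := by
    rw [← integral_const_mul]
    congr 1 with x
    ring
  have hrhs : ∫ x, f' x * p x = ∫ x, p x * f' x := by
    congr 1 with x
    ring
  have hv' : (v : ℝ) ≠ 0 := by exact_mod_cast hv
  rw [integral_gaussianReal_eq_integral_smul hv, integral_gaussianReal_eq_integral_smul hv]
  simp only [smul_eq_mul]
  rw [hlhs, hrhs, sub_zero, zero_sub] at hibp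
  have hdiv : (v : ℝ)⁻¹ * ∫ x, p x * ((x - m) * f x) = ∫ x, p x * f' x := by linarith
  rw [← hdiv, mul_inv_cancel_left₀ hv']

lemma exp_neg_sq_div_isBigO_exp_neg_sq_div {w v : ℝ} (hw : 0 < w) (hwv : w < v) (a b : ℝ)
    (l : Filter ℝ) :
    (fun x => exp (-(x - a) ^ 2 / (2 * w))) =O[l] fun x => exp (-(x + b) ^ 2 / (2 * v)) := by
  -- `(a + b)² / (2(v - w))` is the maximum over `x` of the difference of the two exponents
  refine IsBigO.of_bound (exp ((a + b) ^ 2 / (2 * (v - w)))) (Eventually.of_forall fun x => ?_)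
  simp only [norm_eq_abs, abs_exp, ← exp_add, exp_le_exp]
  have hv : 0 < v := hw.trans hwv
  have hvw : 0 < v - w := sub_pos.mpr hwv
  have hgap : -(x - a) ^ 2 / (2 * w) - ((a + b) ^ 2 / (2 * (v - w)) + -(x + b) ^ 2 / (2 * v))
      = -((v - w) * (x - a) - w * (a + b)) ^ 2 / (2 * v * w * (v - w)) := by
    field_simp
    ring
  have : -((v - w) * (x - a) - w * (a + b)) ^ 2 / (2 * v * w * (v - w)) ≤ 0 :=
    div_nonpos_of_nonpos_of_nonneg (neg_nonpos.mpr (sq_nonneg _)) (by positivity)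
  linarith

lemma tendsto_mul_gaussianPDFReal_of_tendsto_mul_exp {h : ℝ → ℝ} {l : Filter ℝ} {w : NNReal}
    {v : ℝ} (hw : 0 < w) (hwv : w < v) (m n : ℝ)
    (hlim : Tendsto (fun x => h x * exp (-(x + n) ^ 2 / (2 * v))) l (𝓝 0)) :
    Tendsto (fun x => h x * gaussianPDFReal m w x) l (𝓝 0) :=
  ((isBigO_refl h l).mul
    ((exp_neg_sq_div_isBigO_exp_neg_sq_div (NNReal.coe_pos.mpr hw) hwv m n l).const_mul_left
      (√(2 * π * w))⁻¹)).trans_tendsto hlim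

theorem integral_mul_comp_add_const_gaussianReal {w : NNReal} {v : ℝ} (hw : 0 < w)
    (hwv : w < v) {g : ℝ → ℝ} (hg : Differentiable ℝ g) (n : ℝ)
    (hint : Integrable (fun x => x * g (x + n)) (gaussianReal 0 w))
    (hint' : Integrable (fun x => deriv g (x + n)) (gaussianReal 0 w))
    (htop : Tendsto (fun y => g y * exp (-(y ^ 2) / (2 * v))) atTop (𝓝 0))
    (hbot : Tendsto (fun y => g y * exp (-(y ^ 2) / (2 * v))) atBot (𝓝 0)) :
    ∫ x, x * g (x + n) ∂gaussianReal 0 w = w * ∫ x, deriv g (x + n) ∂gaussianReal 0 w := by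
  simpa only [sub_zero] using integral_sub_mul_gaussianReal_eq_mul_integral_deriv
    (fun x => (hg (x + n)).hasDerivAt.comp_add_const x n) (by simpa only [sub_zero] using hint)
    hint'
    (tendsto_mul_gaussianPDFReal_of_tendsto_mul_exp hw hwv 0 n
      (hbot.comp (tendsto_atBot_add_const_right _ n tendsto_id)))
    (tendsto_mul_gaussianPDFReal_of_tendsto_mul_exp hw hwv 0 n
      (htop.comp (tendsto_atTop_add_const_right _ n tendsto_id)))

end ProbabilityTheory

namespace MeasureTheory

variable {Ω α β E : Type*} {mΩ : MeasurableSpace Ω} {mα : MeasurableSpace α}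
  {mβ : MeasurableSpace β} [NormedAddCommGroup E]

theorem integral_comp_eq_integral_integral_of_map_eq_prod [NormedSpace ℝ E] {μ : Measure Ω}
    {ν : Measure α} {ρ : Measure β} [SFinite ν] [SFinite ρ] {Z : Ω → α × β} (hZ : AEMeasurable Z μ)
    (hmap : μ.map Z = ν.prod ρ) {F : α × β → E} (hF : Integrable F (ν.prod ρ)) :
    ∫ ω, F (Z ω) ∂μ = ∫ y, ∫ x, F (x, y) ∂ν ∂ρ := by
  rw [← integral_prod_symm F hF, ← hmap, integral_map hZ (hmap ▸ hF.aestronglyMeasurable)]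

theorem integrable_of_map_eq_of_integrable_comp {μ : Measure Ω} {ν : Measure α} {Z : Ω → α}
    (hZ : AEMeasurable Z μ) (hmap : μ.map Z = ν) {F : α → E} (hFm : AEStronglyMeasurable F ν)
    (hF : Integrable (fun ω => F (Z ω)) μ) : Integrable F ν := by
  subst hmap
  exact (integrable_map_measure hFm hZ).mpr hF

end MeasureTheory

/-- Stein-type identity: for independent centered Gaussians `X ~ N(0, vX)`,
`N ~ N(0, vN)` and a C¹ nonlinearity `g` with vanishing Gaussian tails,
`E[X·g(X+N)] = σ_X²·E[g′(X+N)]`; in particular `k_x = E[g′(Y)]`. -/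
theorem gaussian_partial_gain_eq_avg_derivative
    {Ω : Type*} {mΩ : MeasurableSpace Ω} (μ : Measure Ω) [IsProbabilityMeasure μ]
    (X N : Ω → ℝ) (hXmeas : Measurable X) (hNmeas : Measurable N)
    (vX vN : NNReal) (hvX : 0 < vX) (hvN : 0 < vN)
    (hX : μ.map X = gaussianReal 0 vX) (hN : μ.map N = gaussianReal 0 vN)
    (hindep : IndepFun X N μ)
    (g : ℝ → ℝ) (hg : ContDiff ℝ 1 g)
    (hgX : Integrable (fun ω => g (X ω + N ω) * X ω) μ)
    (hg' : Integrable (fun ω => deriv g (X ω + N ω)) μ)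
    (htop : Tendsto (fun y => g y * Real.exp (-(y ^ 2) / (2 * ((vX : ℝ) + (vN : ℝ)))))
      atTop (nhds 0))
    (hbot : Tendsto (fun y => g y * Real.exp (-(y ^ 2) / (2 * ((vX : ℝ) + (vN : ℝ)))))
      atBot (nhds 0)) :
    (∫ ω, X ω * g (X ω + N ω) ∂μ) = (vX : ℝ) * ∫ ω, deriv g (X ω + N ω) ∂μ
    ∧ (∫ ω, g (X ω + N ω) * X ω ∂μ) / (vX : ℝ) = ∫ ω, deriv g (X ω + N ω) ∂μ := by
  have hZ : AEMeasurable (fun ω => (X ω, N ω)) μ := (hXmeas.prodMk hNmeas).aemeasurable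
  have hmap : μ.map (fun ω => (X ω, N ω)) = (gaussianReal 0 vX).prod (gaussianReal 0 vN) := by
    rw [← hX, ← hN]
    exact (indepFun_iff_map_prod_eq_prod_map_map hXmeas.aemeasurable hNmeas.aemeasurable).mp hindep
  have hgd : Differentiable ℝ g := hg.differentiable one_ne_zero
  have hF : Integrable (fun p : ℝ × ℝ => p.1 * g (p.1 + p.2)) _ :=
    integrable_of_map_eq_of_integrable_comp hZ hmap
      (continuous_fst.mul (hgd.continuous.comp continuous_add)).aestronglyMeasurable
      (hgX.congr (ae_of_all _ fun ω => mul_comm _ _))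
  have hG : Integrable (fun p : ℝ × ℝ => deriv g (p.1 + p.2)) _ :=
    integrable_of_map_eq_of_integrable_comp hZ hmap
      ((measurable_deriv g).comp measurable_add).aestronglyMeasurable hg'
  have hinner : ∀ᵐ n ∂gaussianReal 0 vN, ∫ x, x * g (x + n) ∂gaussianReal 0 vX
      = vX * ∫ x, deriv g (x + n) ∂gaussianReal 0 vX := by
    filter_upwards [hF.prod_left_ae, hG.prod_left_ae] with n hFn hGn
    exact integral_mul_comp_add_const_gaussianReal hvX
      (lt_add_of_pos_right _ (NNReal.coe_pos.mpr hvN)) hgd n hFn hGn htop hbot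
  have hmain : ∫ ω, X ω * g (X ω + N ω) ∂μ = vX * ∫ ω, deriv g (X ω + N ω) ∂μ := by
    rw [integral_comp_eq_integral_integral_of_map_eq_prod hZ hmap hF,
      integral_comp_eq_integral_integral_of_map_eq_prod hZ hmap hG, integral_congr_ae hinner,
      integral_const_mul]
  refine ⟨hmain, ?_⟩
  simp_rw [mul_comm (g _), hmain]
  field_simp [hvX.ne']
end

section
/- Let X and N be independent real random variables, X distributed as the centered Gaussian law G(0, σ_X²) with σ_X > 0, and N distributed as the Gaussian mixture Σ_{l=0}^L β_l·G(0, σ_{N,l}²) with weights β_l ≥ 0 summing to 1 and σ_{N,l} > 0. Let g : ℝ → ℝ be measurable such that g(X+N)·X is integrable and each integral below is finite. Then the partial regression coefficient of g(X+N) on X satisfies k_x := E[g(X+N)·X]/σ_X² = Σ_{l=0}^L β_l·k^{(l)}, where k^{(l)} = (∫ g(y)·y dG(0, σ_X² + σ_{N,l}²)(y)) / (σ_X² + σ_{N,l}²) is the input–output regression coefficient of g under the l-th virtual Gaussian input of variance σ_X² + σ_{N,l}². -/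
/-!
If `X ~ G(0, a)` and `N ~ G(0, b)` are independent, then `Y = X + N ~ G(0, a + b)` and the
residual `W = X - a / (a + b) · Y` are jointly Gaussian and uncorrelated, hence independent,
and `E W = 0`. Writing `g(Y) X = g(Y) (a / (a + b) · Y + W)` and integrating `W` out first gives
`E[g(Y) X] = a / (a + b) · E[g(Y) Y]`. For a Gaussian-mixture noise the joint law of `(X, N)` is
the mixture `Σ β_l · G(0, vX) ⊗ G(0, vN_l)`, and the identity is applied to each component.
-/

open MeasureTheory ProbabilityTheory
open scoped NNReal

namespace MeasureTheory

variable {α β ι : Type*} {mα : MeasurableSpace α} {mβ : MeasurableSpace β}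

lemma Measure.prod_finsetSum_smul_right (μ : Measure α) [SFinite μ] (s : Finset ι)
    (w : ι → ℝ≥0) (ν : ι → Measure β) [∀ i, SFinite (ν i)] :
    μ.prod (∑ i ∈ s, w i • ν i) = ∑ i ∈ s, w i • μ.prod (ν i) := by
  rw [← Finset.sum_coe_sort, ← Measure.sum_fintype, Measure.prod_sum_right, Measure.sum_fintype]
  simp only [Measure.prod_smul_right]
  exact Finset.sum_coe_sort s fun i ↦ w i • μ.prod (ν i)

variable {s : Finset ι} {w : ι → ℝ≥0} {m : ι → Measure α} {f : α → ℝ}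

lemma Integrable.smul_measure_of_finsetSum (hf : Integrable f (∑ i ∈ s, w i • m i)) {i : ι}
    (hi : i ∈ s) : Integrable f (w i • m i) :=
  hf.mono_measure (Finset.single_le_sum (f := fun i ↦ w i • m i) (fun _ _ ↦ Measure.zero_le _) hi)

lemma Integrable.of_finsetSum_smul_measure (hf : Integrable f (∑ i ∈ s, w i • m i)) {i : ι}
    (hi : i ∈ s) (hw : w i ≠ 0) : Integrable f (m i) :=
  (integrable_smul_measure (by simpa using hw) ENNReal.coe_ne_top).1
    (hf.smul_measure_of_finsetSum hi)

lemma integral_finsetSum_smul_measure (hf : Integrable f (∑ i ∈ s, w i • m i)) :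
    ∫ x, f x ∂(∑ i ∈ s, w i • m i) = ∑ i ∈ s, (w i : ℝ) * ∫ x, f x ∂m i := by
  rw [integral_finsetSum_measure fun i hi ↦ hf.smul_measure_of_finsetSum hi]
  simp only [integral_smul_nnreal_measure, NNReal.smul_def, smul_eq_mul]

end MeasureTheory

namespace ProbabilityTheory

variable {Ω : Type*} {mΩ : MeasurableSpace Ω} {P : Measure Ω}

-- The summands `φ (Y ω) * ψ (Y ω)` and `φ (Y ω) * W ω` need not be integrable separately.
lemma IndepFun.integral_comp_mul_add [IsProbabilityMeasure P] {Y W : Ω → ℝ}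
    (hYW : Y ⟂ᵢ[P] W) (hY : AEMeasurable Y P) (hW : Integrable W P) {φ ψ : ℝ → ℝ}
    (hφ : Measurable φ) (hψ : Measurable ψ)
    (hint : Integrable (fun ω ↦ φ (Y ω) * (ψ (Y ω) + W ω)) P) :
    ∫ ω, φ (Y ω) * (ψ (Y ω) + W ω) ∂P = ∫ y, φ y * (ψ y + P[W]) ∂P.map Y := by
  set F : ℝ × ℝ → ℝ := fun q ↦ φ q.1 * (ψ q.1 + q.2)
  have hF : Measurable F := by fun_prop
  have hYW_meas : AEMeasurable (fun ω ↦ (Y ω, W ω)) P := hY.prodMk hW.aemeasurable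
  have hlaw : P.map (fun ω ↦ (Y ω, W ω)) = (P.map Y).prod (P.map W) :=
    (indepFun_iff_map_prod_eq_prod_map_map hY hW.aemeasurable).1 hYW
  have hF_int : Integrable F ((P.map Y).prod (P.map W)) := by
    rw [← hlaw]
    exact (integrable_map_measure hF.aestronglyMeasurable hYW_meas).2 hint
  have hW_map : Integrable (fun w ↦ w) (P.map W) :=
    (integrable_map_measure aestronglyMeasurable_id hW.aemeasurable).2 hW
  have hinner (y : ℝ) : ∫ w, F (y, w) ∂P.map W = φ y * (ψ y + P[W]) := by
    have := Measure.isProbabilityMeasure_map (μ := P) hW.aemeasurable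
    change ∫ w, φ y * (ψ y + w) ∂P.map W = _
    rw [integral_const_mul, integral_add (integrable_const _) hW_map, integral_const,
      integral_map hW.aemeasurable aestronglyMeasurable_id (f := fun w ↦ w)]
    simp
  calc ∫ ω, φ (Y ω) * (ψ (Y ω) + W ω) ∂P = ∫ q, F q ∂P.map (fun ω ↦ (Y ω, W ω)) :=
        (integral_map hYW_meas hF.aestronglyMeasurable).symm
    _ = ∫ y, ∫ w, F (y, w) ∂P.map W ∂P.map Y := by rw [hlaw, integral_prod _ hF_int]
    _ = ∫ y, φ y * (ψ y + P[W]) ∂P.map Y := by simp only [hinner]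

variable {X N : Ω → ℝ} {a b : ℝ≥0}

lemma IndepFun.hasLaw_add_gaussianReal (hX : HasLaw X (gaussianReal 0 a) P)
    (hN : HasLaw N (gaussianReal 0 b) P) (hXN : X ⟂ᵢ[P] N) :
    HasLaw (fun ω ↦ X ω + N ω) (gaussianReal 0 (a + b)) P := by
  simpa [gaussianReal_conv_gaussianReal] using hXN.hasLaw_fun_add hX hN

lemma indepFun_add_sub_mul_add_of_gaussian (hX : HasLaw X (gaussianReal 0 a) P)
    (hN : HasLaw N (gaussianReal 0 b) P) (hXN : X ⟂ᵢ[P] N) :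
    (fun ω ↦ X ω + N ω) ⟂ᵢ[P] (fun ω ↦ X ω - a / (a + b) * (X ω + N ω)) := by
  have := hX.isProbabilityMeasure
  set c : ℝ := a / (a + b)
  have hXN_gauss : HasGaussianLaw (fun ω ↦ (X ω, N ω)) P :=
    IndepFun.hasGaussianLaw hX.hasGaussianLaw hN.hasGaussianLaw hXN
  let S : ℝ × ℝ →L[ℝ] ℝ := ContinuousLinearMap.fst ℝ ℝ ℝ + ContinuousLinearMap.snd ℝ ℝ ℝ
  let L : ℝ × ℝ →L[ℝ] ℝ × ℝ := S.prod (ContinuousLinearMap.fst ℝ ℝ ℝ - c • S)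
  have hYW : HasGaussianLaw (fun ω ↦ (X ω + N ω, X ω - c * (X ω + N ω))) P :=
    hXN_gauss.map_fun L
  refine hYW.indepFun_of_covariance_eq_zero ?_
  have hX2 : MemLp X 2 P := hX.hasGaussianLaw.memLp_two
  have hN2 : MemLp N 2 P := hN.hasGaussianLaw.memLp_two
  have hsum : HasLaw (X + N) (gaussianReal 0 (a + b)) P := hXN.hasLaw_add_gaussianReal hX hN
  have hcov : cov[X + N, X; P] = a := by
    rw [covariance_add_left hX2 hN2 hX2, covariance_self hX2.aemeasurable,
      hXN.symm.covariance_eq_zero hN2 hX2, hX.variance_eq, variance_id_gaussianReal, add_zero]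
  have hvar : cov[X + N, X + N; P] = a + b := by
    rw [covariance_self (hX2.add hN2).aemeasurable, hsum.variance_eq, variance_id_gaussianReal,
      NNReal.coe_add]
  have hc : (a : ℝ) - c * (a + b) = 0 := by
    rcases eq_or_ne ((a : ℝ) + b) 0 with h | h
    · have : (a : ℝ) = 0 := by linarith [a.coe_nonneg, b.coe_nonneg]
      simp [c, this]
    · simp [c, div_mul_cancel₀ _ h]
  change cov[X + N, fun ω ↦ X ω - c * (X + N) ω; P] = 0
  rw [covariance_fun_sub_right (hX2.add hN2) hX2 ((hX2.add hN2).const_mul c),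
    covariance_const_mul_right, hcov, hvar, hc]

theorem integral_comp_add_mul_of_gaussian (hX : HasLaw X (gaussianReal 0 a) P)
    (hN : HasLaw N (gaussianReal 0 b) P) (hXN : X ⟂ᵢ[P] N) {g : ℝ → ℝ} (hg : Measurable g)
    (hint : Integrable (fun ω ↦ g (X ω + N ω) * X ω) P) :
    ∫ ω, g (X ω + N ω) * X ω ∂P = a / (a + b) * ∫ y, g y * y ∂gaussianReal 0 (a + b) := by
  have := hX.isProbabilityMeasure
  set c : ℝ := a / (a + b)
  set Y := fun ω ↦ X ω + N ω
  set W := fun ω ↦ X ω - c * Y ω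
  have hY : HasLaw Y (gaussianReal 0 (a + b)) P := hXN.hasLaw_add_gaussianReal hX hN
  have hX_int : Integrable X P := hX.hasGaussianLaw.integrable
  have hY_int : Integrable Y P := hY.hasGaussianLaw.integrable
  have hW_int : Integrable W P := hX_int.sub (hY_int.const_mul c)
  have hW_mean : P[W] = 0 := by
    rw [integral_sub hX_int (hY_int.const_mul c), integral_const_mul, hX.integral_eq,
      hY.integral_eq, integral_id_gaussianReal, integral_id_gaussianReal, mul_zero, sub_zero]
  have hdecomp : (fun ω ↦ g (X ω + N ω) * X ω) = fun ω ↦ g (Y ω) * (c * Y ω + W ω) := by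
    funext ω
    simp only [Y, W]
    ring
  calc ∫ ω, g (X ω + N ω) * X ω ∂P = ∫ ω, g (Y ω) * (c * Y ω + W ω) ∂P := by rw [hdecomp]
    _ = ∫ y, g y * (c * y + P[W]) ∂P.map Y :=
        (indepFun_add_sub_mul_add_of_gaussian hX hN hXN).integral_comp_mul_add hY.aemeasurable
          hW_int hg (measurable_const_mul c) (hdecomp ▸ hint)
    _ = c * ∫ y, g y * y ∂gaussianReal 0 (a + b) := by
        rw [hW_mean, hY.map_eq, ← integral_const_mul]
        congr 1 with y
        ring

lemma integral_prod_gaussianReal_comp_add_mul_fst {g : ℝ → ℝ} (hg : Measurable g)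
    (hint : Integrable (fun q : ℝ × ℝ ↦ g (q.1 + q.2) * q.1)
      ((gaussianReal 0 a).prod (gaussianReal 0 b))) :
    ∫ q, g (q.1 + q.2) * q.1 ∂(gaussianReal 0 a).prod (gaussianReal 0 b)
      = a / (a + b) * ∫ y, g y * y ∂gaussianReal 0 (a + b) :=
  integral_comp_add_mul_of_gaussian measurePreserving_fst.hasLaw measurePreserving_snd.hasLaw
    (indepFun_prod measurable_id measurable_id) hg hint

end ProbabilityTheory

theorem mixture_partial_gain_kx_general
    {Ω : Type*} {mΩ : MeasurableSpace Ω} (μ : Measure Ω) [IsProbabilityMeasure μ]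
    (X N : Ω → ℝ) (hXmeas : Measurable X) (hNmeas : Measurable N)
    (hindep : IndepFun X N μ)
    (vX : NNReal) (hvX : 0 < vX)
    (L : ℕ) (β : ℕ → NNReal)
    (vN : ℕ → NNReal)
    (hX : μ.map X = gaussianReal 0 vX)
    (hN : μ.map N = ∑ l ∈ Finset.range (L + 1), β l • gaussianReal 0 (vN l))
    (g : ℝ → ℝ) (hg : Measurable g)
    (hgX : Integrable (fun ω => g (X ω + N ω) * X ω) μ) :
    (∫ ω, g (X ω + N ω) * X ω ∂μ) / (vX : ℝ)
      = ∑ l ∈ Finset.range (L + 1),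
          (β l : ℝ) * ((∫ y, g y * y ∂(gaussianReal 0 (vX + vN l)))
            / ((vX : ℝ) + (vN l : ℝ))) := by
  have hlaw : HasLaw (fun ω ↦ (X ω, N ω)) ((gaussianReal 0 vX).prod (μ.map N)) μ :=
    (indepFun_iff_hasLaw_prodMk_prod ⟨hXmeas.aemeasurable, hX⟩ ⟨hNmeas.aemeasurable, rfl⟩).1 hindep
  rw [hN, Measure.prod_finsetSum_smul_right] at hlaw
  have hf : Measurable fun q : ℝ × ℝ ↦ g (q.1 + q.2) * q.1 := by fun_prop
  have hint := (integrable_map_measure hf.aestronglyMeasurable hlaw.aemeasurable).2 hgX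
  rw [hlaw.map_eq] at hint
  rw [show ∫ ω, g (X ω + N ω) * X ω ∂μ = _ from hlaw.integral_comp hf.aestronglyMeasurable,
    integral_finsetSum_smul_measure hint, Finset.sum_div]
  refine Finset.sum_congr rfl fun l hl ↦ ?_
  rcases eq_or_ne (β l) 0 with hβl | hβl
  · simp [hβl]
  rw [integral_prod_gaussianReal_comp_add_mul_fst hg (hint.of_finsetSum_smul_measure hl hβl)]
  field_simp

/-- If `X ~ G(0, vX)` and `N` is an independent zero-mean Gaussian mixture, then
the partial regression coefficient of `g(X+N)` on `X` is the weighted sum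
`k_x = Σ_l β_l·k⁽ˡ⁾` of the input-output regression coefficients of the virtual
Gaussian inputs of variance `vX + vN_l`. -/
theorem mixture_partial_gain_kx
    {Ω : Type*} {mΩ : MeasurableSpace Ω} (μ : Measure Ω) [IsProbabilityMeasure μ]
    (X N : Ω → ℝ) (hXmeas : Measurable X) (hNmeas : Measurable N)
    (hindep : IndepFun X N μ)
    (vX : NNReal) (hvX : 0 < vX)
    (L : ℕ) (β : ℕ → NNReal) (hβ : ∑ l ∈ Finset.range (L + 1), β l = 1)
    (vN : ℕ → NNReal) (hvN : ∀ l ∈ Finset.range (L + 1), 0 < vN l)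
    (hX : μ.map X = gaussianReal 0 vX)
    (hN : μ.map N = ∑ l ∈ Finset.range (L + 1), β l • gaussianReal 0 (vN l))
    (g : ℝ → ℝ) (hg : Measurable g)
    (hgX : Integrable (fun ω => g (X ω + N ω) * X ω) μ)
    (hgl : ∀ l ∈ Finset.range (L + 1),
      Integrable (fun y => g y * y) (gaussianReal 0 (vX + vN l))) :
    (∫ ω, g (X ω + N ω) * X ω ∂μ) / (vX : ℝ)
      = ∑ l ∈ Finset.range (L + 1),
          (β l : ℝ) * ((∫ y, g y * y ∂(gaussianReal 0 (vX + vN l)))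
            / ((vX : ℝ) + (vN l : ℝ))) :=
  mixture_partial_gain_kx_general (mΩ := mΩ) μ X N hXmeas hNmeas hindep vX hvX L β vN hX hN g hg hgX
end

section
/- Let X and N be independent real random variables, X distributed as the centered Gaussian law G(0, σ_X²) with σ_X > 0, and N distributed as the Gaussian mixture Σ_{l=0}^L β_l·G(0, σ_{N,l}²) with weights β_l ≥ 0 summing to 1 and σ_{N,l} > 0; set σ_N² = Σ_{l=0}^L β_l·σ_{N,l}². Let g : ℝ → ℝ be measurable such that g(X+N)·N is integrable and each integral below is finite. Then the partial regression coefficient of g(X+N) on N satisfies k_n := E[g(X+N)·N]/σ_N² = Σ_{l=0}^L (σ_{N,l}²/σ_N²)·β_l·k^{(l)}, where k^{(l)} = (∫ g(y)·y dG(0, σ_X² + σ_{N,l}²)(y)) / (σ_X² + σ_{N,l}²). -/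
/-!
For independent `X ~ G(0, a)` and `N ~ G(0, b)`, the joint density factors as
`φ_a(y - n) φ_b(n) = φ_{a+b}(y) φ_c(n - k y)` with `k = b / (a + b)` and `c = a b / (a + b)`.
So `(X + N, N)` has the law of `(Y, W + k Y)` with `Y ~ G(0, a + b)` and an independent centred
`W ~ G(0, c)`, whence `E[g(X + N) N] = k E[g(Y) Y]`. For a mixture `N`, the law of `(X, N)` is
the mixture of the laws of the Gaussian pairs, and the expectation splits over the components.
-/

open MeasureTheory ProbabilityTheory
open scoped NNReal ENNReal

namespace MeasureTheory

variable {α β : Type*} [MeasurableSpace α] [MeasurableSpace β]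

lemma MeasurePreserving.map_withDensity {P : Measure α} {Q : Measure β} {e : α ≃ᵐ β}
    (he : MeasurePreserving e P Q) (ρ : α → ℝ≥0∞) :
    (P.withDensity ρ).map e = Q.withDensity (ρ ∘ e.symm) := by
  ext s hs
  rw [Measure.map_apply e.measurable hs, withDensity_apply _ (e.measurable hs),
    withDensity_apply _ hs, ← he.setLIntegral_comp_preimage_emb e.measurableEmbedding]
  simp

lemma Measure.prod_finset_sum {ι : Type*} (μ : Measure α) [SFinite μ] (s : Finset ι)
    (ν : ι → Measure β) [∀ i, SFinite (ν i)] :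
    μ.prod (∑ i ∈ s, ν i) = ∑ i ∈ s, μ.prod (ν i) := by
  rw [← Measure.sum_coe_finset, Measure.prod_sum_right,
    Measure.sum_coe_finset s (fun i => μ.prod (ν i))]

variable {E : Type*} [NormedAddCommGroup E] {ι : Type*} {s : Finset ι}
  {c : ι → ℝ≥0} {μ : ι → Measure α} {f : α → E}

lemma integral_finset_sum_smul_measure [NormedSpace ℝ E]
    (hf : Integrable f (∑ i ∈ s, c i • μ i)) :
    ∫ x, f x ∂(∑ i ∈ s, c i • μ i) = ∑ i ∈ s, (c i : ℝ) • ∫ x, f x ∂μ i := by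
  rw [integral_finsetSum_measure (integrable_finsetSum_measure.mp hf)]
  refine Finset.sum_congr rfl fun i _ => ?_
  rw [ENNReal.smul_def, integral_smul_measure, ENNReal.coe_toReal]

lemma Integrable.of_finset_sum_smul_measure (hf : Integrable f (∑ i ∈ s, c i • μ i)) {i : ι}
    (hi : i ∈ s) (hc : c i ≠ 0) : Integrable f (μ i) := by
  have hfi := integrable_finsetSum_measure.mp hf i hi
  rwa [ENNReal.smul_def, integrable_smul_measure (by exact_mod_cast hc) ENNReal.coe_ne_top] at hfi

end MeasureTheory

namespace MeasurableEquiv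

def shearFst : ℝ × ℝ ≃ᵐ ℝ × ℝ where
  toFun p := (p.1 + p.2, p.2)
  invFun q := (q.1 - q.2, q.2)
  left_inv p := by simp
  right_inv q := by simp
  measurable_toFun := (measurable_fst.add measurable_snd).prodMk measurable_snd
  measurable_invFun := (measurable_fst.sub measurable_snd).prodMk measurable_snd

def shearSnd (k : ℝ) : ℝ × ℝ ≃ᵐ ℝ × ℝ where
  toFun p := (p.1, p.2 + k * p.1)
  invFun q := (q.1, q.2 - k * q.1)
  left_inv p := by simp
  right_inv q := by simp
  measurable_toFun := measurable_fst.prodMk (measurable_snd.add (measurable_fst.const_mul k))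
  measurable_invFun := measurable_fst.prodMk (measurable_snd.sub (measurable_fst.const_mul k))

@[simp] lemma shearFst_apply (p : ℝ × ℝ) : shearFst p = (p.1 + p.2, p.2) := rfl
@[simp] lemma shearFst_symm_apply (q : ℝ × ℝ) : shearFst.symm q = (q.1 - q.2, q.2) := rfl
@[simp] lemma shearSnd_apply (k : ℝ) (p : ℝ × ℝ) : shearSnd k p = (p.1, p.2 + k * p.1) := rfl
@[simp] lemma shearSnd_symm_apply (k : ℝ) (q : ℝ × ℝ) :
    (shearSnd k).symm q = (q.1, q.2 - k * q.1) := rfl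

lemma measurePreserving_shearFst :
    MeasurePreserving shearFst ((volume : Measure ℝ).prod volume) (volume.prod volume) := by
  convert Measure.measurePreserving_swap.comp
    (measurePreserving_prod_add_swap (volume : Measure ℝ) volume) using 1
  ext p <;> simp [add_comm]

lemma measurePreserving_shearSnd (k : ℝ) :
    MeasurePreserving (shearSnd k) ((volume : Measure ℝ).prod volume) (volume.prod volume) :=
  (MeasurePreserving.id volume).skew_product (g := fun x y => y + k * x) (by fun_prop)
    (.of_forall fun x => (measurePreserving_add_right volume (k * x)).map_eq)

end MeasurableEquiv

namespace ProbabilityTheory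

open MeasurableEquiv Real

lemma gaussianReal_prod_gaussianReal {v w : ℝ≥0} (hv : v ≠ 0) (hw : w ≠ 0) (m n : ℝ) :
    (gaussianReal m v).prod (gaussianReal n w)
      = (volume.prod volume).withDensity
          (fun p => gaussianPDF m v p.1 * gaussianPDF n w p.2) := by
  rw [gaussianReal_of_var_ne_zero _ hv, gaussianReal_of_var_ne_zero _ hw,
    prod_withDensity (measurable_gaussianPDF _ _) (measurable_gaussianPDF _ _)]

lemma gaussianPDFReal_sub_mul_gaussianPDFReal {a b : ℝ≥0} (ha : a ≠ 0) (hb : b ≠ 0) (y n : ℝ) :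
    gaussianPDFReal 0 a (y - n) * gaussianPDFReal 0 b n
      = gaussianPDFReal 0 (a + b) y
          * gaussianPDFReal 0 (a * b / (a + b)) (n - b / (a + b) * y) := by
  have ha' : (0 : ℝ) < a := by positivity
  have hb' : (0 : ℝ) < b := by positivity
  simp only [gaussianPDFReal, sub_zero, NNReal.coe_add, NNReal.coe_div, NNReal.coe_mul]
  rw [mul_mul_mul_comm, mul_mul_mul_comm (√(2 * π * (a + b)))⁻¹]
  congr 1
  · rw [← mul_inv, ← mul_inv, ← sqrt_mul (by positivity), ← sqrt_mul (by positivity)]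
    field_simp
  · rw [← exp_add, ← exp_add]
    congr 1
    field_simp
    ring

lemma map_shearFst_gaussianReal_prod {a b : ℝ≥0} (ha : a ≠ 0) (hb : b ≠ 0) :
    ((gaussianReal 0 a).prod (gaussianReal 0 b)).map shearFst
      = ((gaussianReal 0 (a + b)).prod (gaussianReal 0 (a * b / (a + b)))).map
          (shearSnd (b / (a + b))) := by
  have hab : a + b ≠ 0 := by positivity
  rw [gaussianReal_prod_gaussianReal ha hb, gaussianReal_prod_gaussianReal hab (by positivity),
    measurePreserving_shearFst.map_withDensity, (measurePreserving_shearSnd _).map_withDensity]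
  congr 1
  ext q
  simp only [Function.comp_apply, shearFst_symm_apply, shearSnd_symm_apply, gaussianPDF]
  rw [← ENNReal.ofReal_mul (gaussianPDFReal_nonneg _ _ _),
    ← ENNReal.ofReal_mul (gaussianPDFReal_nonneg _ _ _),
    gaussianPDFReal_sub_mul_gaussianPDFReal ha hb]

lemma integral_comp_add_mul_snd_gaussianReal_prod {a b : ℝ≥0} (ha : a ≠ 0) (hb : b ≠ 0)
    {g : ℝ → ℝ}
    (hint : Integrable (fun p : ℝ × ℝ => g (p.1 + p.2) * p.2)
      ((gaussianReal 0 a).prod (gaussianReal 0 b)))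
    (hgy : Integrable (fun y => g y * y) (gaussianReal 0 (a + b))) :
    ∫ p : ℝ × ℝ, g (p.1 + p.2) * p.2 ∂((gaussianReal 0 a).prod (gaussianReal 0 b))
      = b / (a + b) * ∫ y, g y * y ∂(gaussianReal 0 (a + b)) := by
  set k : ℝ := b / (a + b)
  set P := (gaussianReal 0 (a + b)).prod (gaussianReal 0 (a * b / (a + b))) with hP
  have hlaw := map_shearFst_gaussianReal_prod ha hb
  have hsum : Integrable (fun q : ℝ × ℝ => g q.1 * (q.2 + k * q.1)) P := by
    refine (integrable_map_equiv (shearSnd k) (fun q => g q.1 * q.2)).mp ?_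
    rw [← hlaw, integrable_map_equiv]
    exact hint
  have hfst : Integrable (fun q : ℝ × ℝ => g q.1 * q.1) P := hgy.comp_fst _
  have hsnd : Integrable (fun q : ℝ × ℝ => g q.1 * q.2) P :=
    (hsum.sub (hfst.const_mul k)).congr (.of_forall fun q => by simp only [Pi.sub_apply]; ring)
  calc ∫ p : ℝ × ℝ, g (p.1 + p.2) * p.2 ∂((gaussianReal 0 a).prod (gaussianReal 0 b))
      = ∫ q : ℝ × ℝ, g q.1 * q.2 ∂(P.map (shearSnd k)) := by
        rw [← hlaw, integral_map_equiv]; rfl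
    _ = ∫ q : ℝ × ℝ, g q.1 * q.2 + k * (g q.1 * q.1) ∂P := by
        rw [integral_map_equiv]; congr 1; ext q; simp only [shearSnd_apply]; ring
    _ = (∫ q : ℝ × ℝ, g q.1 * q.2 ∂P) + k * ∫ q : ℝ × ℝ, g q.1 * q.1 ∂P := by
        rw [integral_add hsnd (hfst.const_mul k), integral_const_mul]
    _ = k * ∫ y, g y * y ∂(gaussianReal 0 (a + b)) := by
        rw [hP, integral_prod_mul g (fun w : ℝ => w), integral_id_gaussianReal, mul_zero,
          zero_add, integral_fun_fst (fun y => g y * y)]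
        simp

end ProbabilityTheory

theorem mixture_partial_gain_kn_general
    {Ω : Type*} {mΩ : MeasurableSpace Ω} (μ : Measure Ω) [IsProbabilityMeasure μ]
    (X N : Ω → ℝ) (hXmeas : Measurable X) (hNmeas : Measurable N)
    (hindep : IndepFun X N μ)
    (vX : NNReal) (hvX : 0 < vX)
    (L : ℕ) (β : ℕ → NNReal)
    (vN : ℕ → NNReal) (hvN : ∀ l ∈ Finset.range (L + 1), 0 < vN l)
    (hX : μ.map X = gaussianReal 0 vX)
    (hN : μ.map N = ∑ l ∈ Finset.range (L + 1), β l • gaussianReal 0 (vN l))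
    (g : ℝ → ℝ) (hg : Measurable g)
    (hgN : Integrable (fun ω => g (X ω + N ω) * N ω) μ)
    (hgl : ∀ l ∈ Finset.range (L + 1),
      Integrable (fun y => g y * y) (gaussianReal 0 (vX + vN l))) :
    (∫ ω, g (X ω + N ω) * N ω ∂μ)
        / (∑ l ∈ Finset.range (L + 1), (β l : ℝ) * (vN l : ℝ))
      = ∑ l ∈ Finset.range (L + 1),
          ((vN l : ℝ) / (∑ j ∈ Finset.range (L + 1), (β j : ℝ) * (vN j : ℝ)))
            * (β l : ℝ)
            * ((∫ y, g y * y ∂(gaussianReal 0 (vX + vN l)))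
              / ((vX : ℝ) + (vN l : ℝ))) := by
  set f : ℝ × ℝ → ℝ := fun p => g (p.1 + p.2) * p.2
  set P : ℕ → Measure (ℝ × ℝ) := fun l => (gaussianReal 0 vX).prod (gaussianReal 0 (vN l))
  have hpair : Measurable fun ω => (X ω, N ω) := hXmeas.prodMk hNmeas
  have hf : Measurable f := by fun_prop
  have hlaw : μ.map (fun ω => (X ω, N ω)) = ∑ l ∈ Finset.range (L + 1), β l • P l := by
    rw [(indepFun_iff_map_prod_eq_prod_map_map hXmeas.aemeasurable hNmeas.aemeasurable).mp
      hindep, hX, hN, Measure.prod_finset_sum]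
    simp_rw [Measure.prod_smul_right]
    rfl
  have hint : Integrable f (∑ l ∈ Finset.range (L + 1), β l • P l) := by
    rw [← hlaw]
    exact (integrable_map_measure hf.aestronglyMeasurable hpair.aemeasurable).mpr hgN
  have hmean : ∫ ω, g (X ω + N ω) * N ω ∂μ = ∫ p, f p ∂(μ.map fun ω => (X ω, N ω)) :=
    (integral_map hpair.aemeasurable hf.aestronglyMeasurable).symm
  have hcomponent : ∀ l ∈ Finset.range (L + 1), (β l : ℝ) * ∫ p, f p ∂P l
      = β l * (vN l / (vX + vN l) * ∫ y, g y * y ∂(gaussianReal 0 (vX + vN l))) := by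
    intro l hl
    rcases eq_or_ne (β l) 0 with hβl | hβl
    · simp [hβl]
    · rw [integral_comp_add_mul_snd_gaussianReal_prod hvX.ne' (hvN l hl).ne'
        (hint.of_finset_sum_smul_measure hl hβl) (hgl l hl)]
  rw [hmean, hlaw, integral_finset_sum_smul_measure hint, Finset.sum_div]
  refine Finset.sum_congr rfl fun l hl => ?_
  rw [smul_eq_mul, hcomponent l hl]
  ring

/-- If `X ~ G(0, vX)` and `N` is an independent zero-mean Gaussian mixture with
variance `σ_N² = Σ_l β_l·vN_l`, then the partial regression coefficient of
`g(X+N)` on `N` is `k_n = Σ_l (vN_l/σ_N²)·β_l·k⁽ˡ⁾`. -/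
theorem mixture_partial_gain_kn
    {Ω : Type*} {mΩ : MeasurableSpace Ω} (μ : Measure Ω) [IsProbabilityMeasure μ]
    (X N : Ω → ℝ) (hXmeas : Measurable X) (hNmeas : Measurable N)
    (hindep : IndepFun X N μ)
    (vX : NNReal) (hvX : 0 < vX)
    (L : ℕ) (β : ℕ → NNReal) (hβ : ∑ l ∈ Finset.range (L + 1), β l = 1)
    (vN : ℕ → NNReal) (hvN : ∀ l ∈ Finset.range (L + 1), 0 < vN l)
    (hX : μ.map X = gaussianReal 0 vX)
    (hN : μ.map N = ∑ l ∈ Finset.range (L + 1), β l • gaussianReal 0 (vN l))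
    (g : ℝ → ℝ) (hg : Measurable g)
    (hgN : Integrable (fun ω => g (X ω + N ω) * N ω) μ)
    (hgl : ∀ l ∈ Finset.range (L + 1),
      Integrable (fun y => g y * y) (gaussianReal 0 (vX + vN l))) :
    (∫ ω, g (X ω + N ω) * N ω ∂μ)
        / (∑ l ∈ Finset.range (L + 1), (β l : ℝ) * (vN l : ℝ))
      = ∑ l ∈ Finset.range (L + 1),
          ((vN l : ℝ) / (∑ j ∈ Finset.range (L + 1), (β j : ℝ) * (vN j : ℝ)))
            * (β l : ℝ)
            * ((∫ y, g y * y ∂(gaussianReal 0 (vX + vN l)))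
              / ((vX : ℝ) + (vN l : ℝ))) :=
  mixture_partial_gain_kn_general (mΩ := mΩ) μ X N hXmeas hNmeas hindep vX hvX L β vN hvN hX hN g hg
    hgN hgl
end
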